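/- arXiv:2408.12524 — 2 statements merged into one kernel-verified Lean document; each statement's English description precedes it below -/
import Mathlib

section
/- The function h : [0,1] → ℝ defined by h(y) = 1 − (1 + max(y − 1 + ln 2, 0))·exp(−y − max(y − 1 + ln 2, 0)) is concave on the interval [0,1]. -/
/-!
Write `t = max (y - a) 0`; the paper's kink is at `a = 1 - log 2`, but the argument works for any `a`.
The branches `1 - e^{-y}` and `1 - (1 + t) e^{-y-t}` both have slope `e^{-a}` at `y = a`, so the
function is differentiable with derivative `(1 + 2t) e^{-y-t}`. That derivative is antitone:
on the right branch it is `e^{-a} (1 + u) e^{-u}` with `u = 2t ≥ 0`, and `(1 + u) e^{-u}`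
decreases because `e^{v-u} ≥ 1 + (v - u)`.
-/

open Real Set

theorem hasDerivAt_of_eqOn_Iic_of_eqOn_Ici {F : Type*} [NormedAddCommGroup F] [NormedSpace ℝ F]
    {f g₁ g₂ f' g₁' g₂' : ℝ → F} {a : ℝ}
    (hg₁ : ∀ x, HasDerivAt g₁ (g₁' x) x) (hg₂ : ∀ x, HasDerivAt g₂ (g₂' x) x)
    (hf₁ : EqOn f g₁ (Iic a)) (hf₂ : EqOn f g₂ (Ici a))
    (hf'₁ : EqOn f' g₁' (Iic a)) (hf'₂ : EqOn f' g₂' (Ici a)) (x : ℝ) :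
    HasDerivAt f (f' x) x := by
  have within : ∀ {g g' : ℝ → F} {s : Set ℝ}, IsClosed s → (∀ x, HasDerivAt g (g' x) x) →
      EqOn f g s → EqOn f' g' s → HasDerivWithinAt f (f' x) s x := by
    intro g g' s hs hg hf hf'
    by_cases hx : x ∈ s
    · rw [hf' hx]
      exact (hg x).hasDerivWithinAt.congr hf (hf hx)
    · exact HasFDerivWithinAt.of_notMem_closure (by rwa [hs.closure_eq])
  have h := (within isClosed_Iic hg₁ hf₁ hf'₁).union (within isClosed_Ici hg₂ hf₂ hf'₂)
  rwa [Iic_union_Ici, hasDerivWithinAt_univ] at h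

theorem antitoneOn_one_add_mul_exp_neg : AntitoneOn (fun u : ℝ => (1 + u) * exp (-u)) (Ici 0) := by
  intro u (hu : 0 ≤ u) v _ huv
  have key : 1 + v ≤ (1 + u) * exp (v - u) := calc
    1 + v ≤ (1 + u) * (v - u + 1) := by nlinarith
    _ ≤ (1 + u) * exp (v - u) := by gcongr; exact add_one_le_exp _
  calc (1 + v) * exp (-v) ≤ (1 + u) * exp (v - u) * exp (-v) := by gcongr
    _ = (1 + u) * exp (-u) := by rw [mul_assoc, ← exp_add]; ring_nf

noncomputable def matchingBound (a y : ℝ) : ℝ :=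
  1 - (1 + max (y - a) 0) * exp (-y - max (y - a) 0)

noncomputable def matchingBoundDeriv (a y : ℝ) : ℝ :=
  (1 + 2 * max (y - a) 0) * exp (-y - max (y - a) 0)

section
variable {a y : ℝ}

theorem matchingBound_of_le (hy : y ≤ a) : matchingBound a y = 1 - exp (-y) := by
  simp [matchingBound, max_eq_right (sub_nonpos.2 hy)]

theorem matchingBoundDeriv_of_le (hy : y ≤ a) : matchingBoundDeriv a y = exp (-y) := by
  simp [matchingBoundDeriv, max_eq_right (sub_nonpos.2 hy)]

theorem matchingBound_of_ge (hy : a ≤ y) :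
    matchingBound a y = 1 - (1 + (y - a)) * exp (-y - (y - a)) := by
  simp [matchingBound, max_eq_left (sub_nonneg.2 hy)]

theorem matchingBoundDeriv_of_ge (hy : a ≤ y) :
    matchingBoundDeriv a y = exp (-a) * ((1 + 2 * (y - a)) * exp (-(2 * (y - a)))) := by
  rw [matchingBoundDeriv, max_eq_left (sub_nonneg.2 hy), mul_left_comm, ← exp_add]
  ring_nf

end

theorem hasDerivAt_matchingBound (a y : ℝ) :
    HasDerivAt (matchingBound a) (matchingBoundDeriv a y) y := by
  refine hasDerivAt_of_eqOn_Iic_of_eqOn_Ici (a := a)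
    (g₁ := fun y => 1 - exp (-y)) (g₁' := fun y => exp (-y))
    (g₂ := fun y => 1 - (1 + (y - a)) * exp (-y - (y - a)))
    (g₂' := fun y => (1 + 2 * (y - a)) * exp (-y - (y - a))) ?_ ?_
    (fun y hy => matchingBound_of_le hy) (fun y hy => matchingBound_of_ge hy)
    (fun y hy => matchingBoundDeriv_of_le hy) ?_ y
  · intro x
    exact ((hasDerivAt_neg x).exp.const_sub 1).congr_deriv (by ring)
  · intro x
    have hlin : HasDerivAt (fun y : ℝ => y - a) 1 x := (hasDerivAt_id x).sub_const a
    have hexp : HasDerivAt (fun y : ℝ => -y - (y - a)) (-1 - 1) x := (hasDerivAt_neg x).sub hlin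
    exact ((hlin.const_add 1).mul hexp.exp |>.const_sub 1).congr_deriv (by ring)
  · intro y (hy : a ≤ y)
    simp only [matchingBoundDeriv, max_eq_left (sub_nonneg.2 hy)]

theorem antitone_matchingBoundDeriv (a : ℝ) : Antitone (matchingBoundDeriv a) := by
  refine AntitoneOn.Iic_union_Ici (a := a) ?_ ?_
  · intro y (hy : y ≤ a) z (hz : z ≤ a) hyz
    rw [matchingBoundDeriv_of_le hy, matchingBoundDeriv_of_le hz]
    gcongr
  · intro y (hy : a ≤ y) z (hz : a ≤ z) hyz
    rw [matchingBoundDeriv_of_ge hy, matchingBoundDeriv_of_ge hz]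
    exact mul_le_mul_of_nonneg_left (antitoneOn_one_add_mul_exp_neg
      (mem_Ici.2 (by linarith)) (mem_Ici.2 (by linarith)) (by linarith)) (exp_pos _).le

theorem concaveOn_matchingBound (a : ℝ) : ConcaveOn ℝ univ (matchingBound a) := by
  have hderiv : deriv (matchingBound a) = matchingBoundDeriv a :=
    funext fun y => (hasDerivAt_matchingBound a y).deriv
  exact Antitone.concaveOn_univ_of_deriv (fun y => (hasDerivAt_matchingBound a y).differentiableAt)
    (hderiv ▸ antitone_matchingBoundDeriv a)

/-- Appendix B.2: concavity of Equation (8). -/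
theorem concave_socs_basic_matching_bound :
    ConcaveOn ℝ (Set.Icc (0 : ℝ) 1)
      (fun y : ℝ => 1 - (1 + max (y - 1 + Real.log 2) 0)
        * Real.exp (-y - max (y - 1 + Real.log 2) 0)) := by
  have h := (concaveOn_matchingBound (1 - log 2)).subset (subset_univ _) (convex_Icc 0 1)
  convert h using 1
  funext y
  rw [matchingBound, show y - (1 - log 2) = y - 1 + log 2 by ring]
end

section
/- The function h : [0,1] → ℝ defined piecewise by h(y) = 1 − (1 + y/2)·e^{−2y} − (1/2)·y·(1 − y) for 0 ≤ y ≤ 1/2, and h(y) = 1 − e^{−2y}·(1 + (1/2 + e/4)·y) for 1/2 ≤ y ≤ 1, is well defined (the two formulas agree at y = 1/2, both equal to 1 − (5/4)e^{−1} − 1/8) and concave on the interval [0,1]. -/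
/-!
Both branches have antitone derivatives: for the left one this is `exp (2 * y) ≤ 2 + 2 * y` on
`[0, 1/2]`, which follows from the chord bound for `exp` on `[0, 1]` and `e < 3`; for the right
one the second derivative `exp (-2 * y) * (e - 2 - (2 + e) * y)` is negative for `y > 1/2`.
At `y = 1/2` the branches meet with the same value and the same slope `2 / e`, so the glued
function is differentiable with an antitone derivative on `[0, 1]`, hence concave.
-/

open Real Set

theorem hasDerivAt_ite_le {f g f' g' : ℝ → ℝ} {c : ℝ} (hf : ∀ x, HasDerivAt f (f' x) x)
    (hg : ∀ x, HasDerivAt g (g' x) x) (hfg : f c = g c) (hfg' : f' c = g' c) (x : ℝ) :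
    HasDerivAt (fun y => if y ≤ c then f y else g y) (if x ≤ c then f' x else g' x) x := by
  rcases lt_trichotomy x c with hxc | rfl | hxc
  · rw [if_pos hxc.le]
    refine (hf x).congr_of_eventuallyEq ?_
    filter_upwards [Iio_mem_nhds hxc] with y hy
    exact if_pos (le_of_lt hy)
  · rw [if_pos le_rfl]
    have hleft : HasDerivWithinAt (fun y => if y ≤ x then f y else g y) (f' x) (Iic x) x :=
      (hf x).hasDerivWithinAt.congr (fun y hy => if_pos hy) (if_pos le_rfl)
    have hright : HasDerivWithinAt (fun y => if y ≤ x then f y else g y) (f' x) (Ici x) x := by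
      rw [hfg']
      refine (hg x).hasDerivWithinAt.congr (fun y hy => ?_) (by rw [if_pos le_rfl, hfg])
      rcases (mem_Ici.mp hy).eq_or_lt with rfl | hxy
      · rw [if_pos le_rfl, hfg]
      · exact if_neg (not_le.mpr hxy)
    simpa only [Iic_union_Ici, hasDerivWithinAt_univ] using hleft.union hright
  · rw [if_neg (not_le.mpr hxc)]
    refine (hg x).congr_of_eventuallyEq ?_
    filter_upwards [Ioi_mem_nhds hxc] with y hy
    exact if_neg (not_le.mpr hy)

theorem concaveOn_Icc_ite_le {f g f' g' : ℝ → ℝ} {a b c : ℝ} (hac : a ≤ c) (hcb : c ≤ b)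
    (hf : ∀ x, HasDerivAt f (f' x) x) (hg : ∀ x, HasDerivAt g (g' x) x)
    (hfg : f c = g c) (hfg' : f' c = g' c)
    (hf' : AntitoneOn f' (Icc a c)) (hg' : AntitoneOn g' (Icc c b)) :
    ConcaveOn ℝ (Icc a b) (fun y => if y ≤ c then f y else g y) := by
  have hderiv := hasDerivAt_ite_le hf hg hfg hfg'
  have hanti : AntitoneOn (fun x => if x ≤ c then f' x else g' x) (Icc a b) := by
    rw [← Icc_union_Icc_eq_Icc hac hcb]
    refine AntitoneOn.union_right ?_ ?_ (isGreatest_Icc hac) (isLeast_Icc hcb)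
    · exact hf'.congr fun x hx => (if_pos hx.2).symm
    · refine hg'.congr fun x hx => ?_
      rcases hx.1.eq_or_lt with rfl | hcx
      · rw [if_pos le_rfl, hfg']
      · exact (if_neg (not_le.mpr hcx)).symm
  refine AntitoneOn.concaveOn_of_deriv (convex_Icc a b)
    (fun x _ => (hderiv x).continuousAt.continuousWithinAt)
    (fun x _ => (hderiv x).differentiableAt.differentiableWithinAt) ?_
  rw [funext fun x => (hderiv x).deriv]
  exact hanti.mono interior_subset

theorem antitoneOn_of_hasDerivAt_nonpos {D : Set ℝ} (hD : Convex ℝ D) {f f' : ℝ → ℝ}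
    (hf : ∀ x, HasDerivAt f (f' x) x) (hf' : ∀ x ∈ interior D, f' x ≤ 0) : AntitoneOn f D :=
  antitoneOn_of_hasDerivWithinAt_nonpos hD (fun x _ => (hf x).continuousAt.continuousWithinAt)
    (fun x _ => (hf x).hasDerivWithinAt) hf'

theorem exp_le_one_add_mul_of_mem_Icc {t : ℝ} (ht₀ : 0 ≤ t) (ht₁ : t ≤ 1) :
    exp t ≤ 1 + (exp 1 - 1) * t := by
  have := convexOn_exp.2 (mem_univ 0) (mem_univ 1) (sub_nonneg.2 ht₁) ht₀ (by ring)
  simp only [smul_eq_mul, mul_zero, mul_one, zero_add, exp_zero] at this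
  linarith

theorem hasDerivAt_exp_neg_two_mul (y : ℝ) :
    HasDerivAt (fun x => exp (-2 * x)) (exp (-2 * y) * (-2)) y := by
  simpa using ((hasDerivAt_id y).const_mul (-2 : ℝ)).exp

namespace SocsBound

noncomputable def left (y : ℝ) : ℝ := 1 - (1 + y / 2) * exp (-2 * y) - (1 / 2) * y * (1 - y)

noncomputable def right (y : ℝ) : ℝ := 1 - exp (-2 * y) * (1 + (1 / 2 + exp 1 / 4) * y)

noncomputable def leftDeriv (y : ℝ) : ℝ := (3 / 2 + y) * exp (-2 * y) - 1 / 2 + y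

noncomputable def rightDeriv (y : ℝ) : ℝ := exp (-2 * y) * (3 / 2 - exp 1 / 4 + (1 + exp 1 / 2) * y)

theorem hasDerivAt_left (y : ℝ) : HasDerivAt left (leftDeriv y) y := by
  have h := (((((hasDerivAt_id y).div_const 2).const_add 1).mul
    (hasDerivAt_exp_neg_two_mul y)).const_sub 1).sub
    (((hasDerivAt_id y).const_mul (1 / 2)).mul ((hasDerivAt_id y).const_sub 1))
  refine h.congr_deriv ?_
  simp only [id, leftDeriv]
  ring

theorem hasDerivAt_right (y : ℝ) : HasDerivAt right (rightDeriv y) y := by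
  have h := ((hasDerivAt_exp_neg_two_mul y).mul
    (((hasDerivAt_id y).const_mul (1 / 2 + exp 1 / 4)).const_add 1)).const_sub 1
  refine h.congr_deriv ?_
  simp only [id, rightDeriv]
  ring

theorem hasDerivAt_leftDeriv (y : ℝ) :
    HasDerivAt leftDeriv (1 - (2 + 2 * y) * exp (-2 * y)) y := by
  have h := ((((hasDerivAt_id y).const_add (3 / 2)).mul
    (hasDerivAt_exp_neg_two_mul y)).sub_const (1 / 2)).add (hasDerivAt_id y)
  refine h.congr_deriv ?_
  simp only [id]
  ring

theorem hasDerivAt_rightDeriv (y : ℝ) :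
    HasDerivAt rightDeriv (exp (-2 * y) * (exp 1 - 2 - (2 + exp 1) * y)) y := by
  have h := (hasDerivAt_exp_neg_two_mul y).mul
    (((hasDerivAt_id y).const_mul (1 + exp 1 / 2)).const_add (3 / 2 - exp 1 / 4))
  refine h.congr_deriv ?_
  simp only [id]
  ring

theorem left_half : left (1 / 2) = 1 - (5 / 4) * exp (-1) - 1 / 8 := by
  norm_num [left]

theorem left_half_eq_right_half : left (1 / 2) = right (1 / 2) := by
  rw [left_half, right, show (-2 * (1 / 2) : ℝ) = -1 by norm_num, exp_neg]
  field_simp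
  ring

theorem leftDeriv_half_eq_rightDeriv_half : leftDeriv (1 / 2) = rightDeriv (1 / 2) := by
  simp only [leftDeriv, rightDeriv]
  ring

theorem antitoneOn_leftDeriv : AntitoneOn leftDeriv (Icc 0 (1 / 2)) := by
  refine antitoneOn_of_hasDerivAt_nonpos (convex_Icc _ _) hasDerivAt_leftDeriv fun y hy => ?_
  rw [interior_Icc] at hy
  have hexp : exp (2 * y) ≤ 1 + (exp 1 - 1) * (2 * y) :=
    exp_le_one_add_mul_of_mem_Icc (by linarith [hy.1]) (by linarith [hy.2])
  rw [neg_mul, exp_neg, sub_nonpos, ← div_eq_mul_inv, le_div_iff₀ (exp_pos _)]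
  nlinarith [mul_pos (sub_pos.2 exp_one_lt_three) hy.1, hy.2]

theorem antitoneOn_rightDeriv : AntitoneOn rightDeriv (Icc (1 / 2) 1) := by
  refine antitoneOn_of_hasDerivAt_nonpos (convex_Icc _ _) hasDerivAt_rightDeriv fun y hy => ?_
  rw [interior_Icc] at hy
  exact mul_nonpos_of_nonneg_of_nonpos (exp_pos _).le
    (by nlinarith [exp_one_lt_three, exp_pos 1, hy.1])

end SocsBound

/-- Appendix B.4: the piecewise matching-probability bound (Equation (10)) is
well defined and concave on [0,1]. -/
theorem concave_socs_matching_random_order_bound :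
    (1 - (1 + (1/2 : ℝ)/2) * exp (-2 * (1/2)) - (1/2) * (1/2) * (1 - 1/2)
        = 1 - exp (-2 * (1/2)) * (1 + (1/2 + exp 1 / 4) * (1/2)))
    ∧ (1 - (1 + (1/2 : ℝ)/2) * exp (-2 * (1/2)) - (1/2) * (1/2) * (1 - 1/2)
        = 1 - (5/4) * exp (-1) - 1/8)
    ∧ ConcaveOn ℝ (Set.Icc (0 : ℝ) 1)
        (fun y : ℝ => if y ≤ 1/2
          then 1 - (1 + y/2) * exp (-2 * y) - (1/2) * y * (1 - y)
          else 1 - exp (-2 * y) * (1 + (1/2 + exp 1 / 4) * y)) :=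
  ⟨SocsBound.left_half_eq_right_half, SocsBound.left_half,
    concaveOn_Icc_ite_le (by norm_num) (by norm_num) SocsBound.hasDerivAt_left
      SocsBound.hasDerivAt_right SocsBound.left_half_eq_right_half
      SocsBound.leftDeriv_half_eq_rightDeriv_half SocsBound.antitoneOn_leftDeriv
      SocsBound.antitoneOn_rightDeriv⟩
end
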